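/- Let V be an n×n integer matrix with nonzero determinant, and let f_i(x) = x^{v_i} + 1 for i = 1,...,n, where v_i ∈ ℤⁿ is the i-th row of V and x^{v_i} denotes the Laurent monomial x₁^{v_{i,1}}···x_n^{v_{i,n}}. Then for any a ∈ ℤⁿ, the product of x^a over all |det V| common solutions x ∈ (ℂ∖0)ⁿ of f₁(x) = ... = f_n(x) = 0 equals (−1)^{det₂(v̄₁,...,v̄_n, ā)}, where v̄ᵢ, ā denote reductions mod 2 in F₂ⁿ and det₂ is the 2-determinant of n+1 vectors in F₂ⁿ. -/

import Mathlib

/-!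
By the Smith normal form, `V = P * diagonal d * Q` with `P, Q ∈ GL_n(ℤ)` and all `d i > 0`.
The monomial change of coordinates `y = x^Q` is an automorphism of the torus turning the system
into `y_i ^ d_i = (-1) ^ c_i`, where `c_i` is the `i`-th row sum of `P⁻¹`. Its solution set is a
product of sets of roots, and by Vieta the `d`-th roots of `e` multiply to `(-1)^(d+1) e`. Writing
`a = α Q`, this gives `∏ x^a = (-1)^E` with `E = ∑_i (d_i + 1 + c_i) α_i ∏_{j ≠ i} d_j`.

Mod 2, the relations `∑ λ_i k_i = 0` among `v̄_1, …, v̄_n, ā` correspond, through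
`ν = (λ_1, …, λ_n) P̄` and `t = λ_{n+1}`, to the solutions of `ν_i d_i + t α_i = 0`, and
`∑ λ_i = ∑ ν_i c_i + t`. Splitting into cases by the number of even `d_i` (and the parity of
`α_i` when there is exactly one) shows that `E ≡ det₂ (v̄_1, …, v̄_n, ā) mod 2`.
-/

open Classical in
noncomputable def det2 (n : ℕ) (k : Fin (n + 1) → Fin n → ZMod 2) : ZMod 2 :=
  if h : Module.finrank (ZMod 2) (Submodule.span (ZMod 2) (Set.range k)) = n ∧
      ∃ lam : Fin (n + 1) → ZMod 2, lam ≠ 0 ∧ ∀ j, ∑ i, lam i * k i j = 0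
  then (∑ i, h.2.choose i) + 1
  else 0

open Finset
open scoped Matrix MatrixGroups

theorem Finset.prod_zpow_eq_zpow_sum {ι G : Type*} [CommGroup G] (s : Finset ι) (f : ι → ℤ)
    (a : G) : ∏ i ∈ s, a ^ f i = a ^ ∑ i ∈ s, f i :=
  cons_induction (by simp) (fun _ _ _ _ ↦ by simp [prod_cons, sum_cons, zpow_add, *]) s

theorem Fintype.prod_piFinset_comp_eval {ι κ M : Type*} [Fintype ι] [DecidableEq ι]
    [DecidableEq κ] [CommMonoid M] (s : ι → Finset κ) (i : ι) (f : κ → M) :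
    ∏ g ∈ piFinset s, f (g i) = (∏ b ∈ s i, f b) ^ ∏ j ∈ univ.erase i, #(s j) := by
  rw [← prod_fiberwise_of_maps_to (g := fun g => g i) fun g hg => mem_piFinset.mp hg i,
    ← prod_pow]
  refine Finset.prod_congr rfl fun b hb => ?_
  rw [Finset.prod_congr rfl fun g hg => by rw [(mem_filter.mp hg).2], prod_const,
    card_filter_piFinset_eq_of_mem s i hb]

theorem neg_one_zpow_eq_pow_val {G : Type*} [Group G] [HasDistribNeg G] (m : ℤ) :
    (-1 : G) ^ m = (-1) ^ (m : ZMod 2).val := by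
  rw [zpow_eq_zpow_emod' m (n := 2) (by simp), ← ZMod.val_intCast, zpow_natCast]

theorem ZMod.eq_zero_or_eq_one (x : ZMod 2) : x = 0 ∨ x = 1 := by
  revert x
  decide

section Monomial

variable {ι G : Type*} [Fintype ι] [CommGroup G]

def laurentMonomial (x : ι → G) (w : ι → ℤ) : G := ∏ j, x j ^ w j

def monomialMap (A : Matrix ι ι ℤ) (x : ι → G) : ι → G := fun i => laurentMonomial x (A i)

theorem laurentMonomial_const (g : G) (w : ι → ℤ) :
    laurentMonomial (fun _ => g) w = g ^ ∑ j, w j :=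
  prod_zpow_eq_zpow_sum _ _ _

theorem laurentMonomial_monomialMap (A : Matrix ι ι ℤ) (x : ι → G) (w : ι → ℤ) :
    laurentMonomial (monomialMap A x) w = laurentMonomial x (w ᵥ* A) := by
  simp only [laurentMonomial, monomialMap, ← prod_zpow, ← zpow_mul]
  rw [prod_comm]
  refine prod_congr rfl fun j _ => ?_
  rw [prod_zpow_eq_zpow_sum, Matrix.vecMul, dotProduct]
  simp_rw [mul_comm]

theorem monomialMap_mul (A B : Matrix ι ι ℤ) (x : ι → G) :
    monomialMap (A * B) x = monomialMap A (monomialMap B x) := by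
  ext i
  rw [monomialMap, monomialMap, laurentMonomial_monomialMap]
  rfl

theorem prod_piFinset_laurentMonomial [DecidableEq ι] (R : ι → Finset G) (w : ι → ℤ) :
    ∏ y ∈ Fintype.piFinset R, laurentMonomial y w =
      ∏ i, (∏ z ∈ R i, z) ^ (w i * ∏ j ∈ univ.erase i, (#(R j) : ℤ)) := by
  classical
  simp only [laurentMonomial]
  rw [prod_comm]
  refine Finset.prod_congr rfl fun i _ => ?_
  rw [Fintype.prod_piFinset_comp_eval R i (· ^ w i), prod_zpow, zpow_mul, ← zpow_natCast,
    Nat.cast_prod]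

variable [DecidableEq ι]

theorem monomialMap_diagonal (d : ι → ℤ) (y : ι → G) :
    monomialMap (Matrix.diagonal d) y = fun i => y i ^ d i := by
  ext i
  simp [monomialMap, laurentMonomial, Matrix.diagonal_apply]

theorem monomialMap_one (x : ι → G) : monomialMap 1 x = x := by
  simpa using monomialMap_diagonal 1 x

def monomialEquiv (U : GL ι ℤ) : (ι → G) ≃ (ι → G) where
  toFun := monomialMap U
  invFun := monomialMap ↑U⁻¹
  left_inv x := by rw [← monomialMap_mul, U.inv_mul, monomialMap_one]
  right_inv y := by rw [← monomialMap_mul, U.mul_inv, monomialMap_one]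

theorem laurentMonomial_monomialEquiv (U : GL ι ℤ) (x : ι → G) (w : ι → ℤ) :
    laurentMonomial (monomialEquiv U x) (w ᵥ* ↑U⁻¹) = laurentMonomial x w := by
  rw [monomialEquiv, Equiv.coe_fn_mk, laurentMonomial_monomialMap, Matrix.vecMul_vecMul,
    Units.inv_mul, Matrix.vecMul_one]

theorem forall_laurentMonomial_mul_diagonal_mul_eq_iff (P Q : GL ι ℤ) (d : ι → ℕ) (g : G)
    (x : ι → G) :
    (∀ i, laurentMonomial x
        (((P : Matrix ι ι ℤ) * Matrix.diagonal (fun i => (d i : ℤ)) * Q) i) = g) ↔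
      ∀ i, monomialEquiv Q x i ^ d i = g ^ ∑ j, (↑P⁻¹ : Matrix ι ι ℤ) i j := by
  calc _ ↔ monomialMap ((P : Matrix ι ι ℤ) * Matrix.diagonal (fun i => (d i : ℤ)) *
          (Q : Matrix ι ι ℤ)) x = fun _ => g := funext_iff.symm
    _ ↔ monomialEquiv P (monomialMap (Matrix.diagonal fun i => (d i : ℤ)) (monomialEquiv Q x)) =
          fun _ => g := by rw [monomialMap_mul, monomialMap_mul]; rfl
    _ ↔ monomialMap (Matrix.diagonal fun i => (d i : ℤ)) (monomialEquiv Q x) =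
          monomialMap ↑P⁻¹ fun _ => g := (Equiv.eq_symm_apply _).symm
    _ ↔ _ := by
      simp only [monomialMap_diagonal, funext_iff, monomialMap, laurentMonomial_const,
        zpow_natCast]

end Monomial

namespace IsAlgClosed

open Polynomial

variable {K : Type*} [Field K] [IsAlgClosed K]

theorem card_nthRoots (n : ℕ) (a : K) : Multiset.card (nthRoots n a) = n := by
  rw [nthRoots, splits_iff_card_roots.mp (IsAlgClosed.splits _), natDegree_X_pow_sub_C]

theorem prod_nthRoots {n : ℕ} (hn : 0 < n) (a : K) :
    (nthRoots n a).prod = (-1) ^ (n + 1) * a := by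
  have h := (IsAlgClosed.splits (X ^ n - C a)).coeff_zero_eq_prod_roots_of_monic
    (monic_X_pow_sub_C a hn.ne')
  rw [natDegree_X_pow_sub_C, coeff_sub, coeff_C_zero, coeff_X_pow, if_neg hn.ne, zero_sub] at h
  rw [nthRoots, pow_succ, mul_assoc, neg_one_mul, h, ← mul_assoc, ← mul_pow]
  simp

theorem exists_finset_units_pow_eq {n : ℕ} (hn : (n : K) ≠ 0) (e : Kˣ) :
    ∃ R : Finset Kˣ, (∀ z, z ∈ R ↔ z ^ n = e) ∧ #R = n ∧
      ∏ z ∈ R, z = (-1) ^ (n + 1) * e := by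
  classical
  have hn0 : 0 < n := Nat.pos_of_ne_zero (by rintro rfl; simp at hn)
  have hnodup : (nthRoots n (e : K)).Nodup :=
    nodup_roots (separable_X_pow_sub_C _ hn e.ne_zero)
  have hunit : ∀ w ∈ nthRootsFinset n (e : K), w ∈ Set.range ((↑) : Kˣ → K) :=
    fun w hw => ⟨Units.mk0 w (ne_zero_of_mem_nthRootsFinset e.ne_zero hw), rfl⟩
  refine ⟨(nthRootsFinset n (e : K)).preimage (↑) Units.val_injective.injOn,
    fun z => ?_, ?_, ?_⟩
  · simp [mem_nthRootsFinset hn0, ← Units.val_pow_eq_pow_val, Units.ext_iff]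
  · rw [card_preimage, filter_true_of_mem hunit, nthRootsFinset_def,
      Multiset.toFinset_card_of_nodup hnodup, card_nthRoots]
  · apply Units.val_injective
    rw [Units.coe_prod]
    refine (prod_preimage _ _ _ (fun w => w) fun w hw h => (h (hunit w hw)).elim).trans ?_
    rw [nthRootsFinset_def, prod_eq_multiset_prod, Multiset.toFinset_val, hnodup.dedup,
      Multiset.map_id', prod_nthRoots hn0]
    simp

end IsAlgClosed

section SmithNormalForm

variable {ι : Type*} [Fintype ι] [DecidableEq ι]

noncomputable def Module.Basis.toMatrixTransposeUnit {R M : Type*} [CommRing R] [AddCommGroup M]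
    [Module R M] (b b' : Module.Basis ι R M) : GL ι R where
  val := (b.toMatrix b')ᵀ
  inv := (b'.toMatrix b)ᵀ
  val_inv := by rw [← Matrix.transpose_mul, b'.toMatrix_mul_toMatrix_flip, Matrix.transpose_one]
  inv_val := by rw [← Matrix.transpose_mul, b.toMatrix_mul_toMatrix_flip, Matrix.transpose_one]

def Matrix.diagonalSignUnit (s : ι → ℤ) (hs : ∀ i, s i ≠ 0) : GL ι ℤ :=
  have h : Matrix.diagonal (fun i => (s i).sign) * Matrix.diagonal (fun i => (s i).sign) = 1 := by
    rw [Matrix.diagonal_mul_diagonal, ← Matrix.diagonal_one]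
    congr 1
    ext i
    rcases (hs i).lt_or_gt with h | h <;>
      simp [Int.sign_eq_neg_one_of_neg, Int.sign_eq_one_of_pos, h]
  ⟨_, _, h, h⟩

theorem Matrix.exists_eq_mul_diagonal_mul (V : Matrix ι ι ℤ) (hV : V.det ≠ 0) :
    ∃ (P Q : GL ι ℤ) (d : ι → ℕ), (∀ i, 0 < d i) ∧
      V = P * Matrix.diagonal (fun i => (d i : ℤ)) * Q := by
  have hli := Matrix.linearIndependent_rows_of_det_ne_zero hV
  set N := Submodule.span ℤ (Set.range fun i => V i)
  have hN : Module.finrank ℤ N = Module.finrank ℤ (ι → ℤ) := by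
    rw [finrank_span_eq_card hli, Module.finrank_fintype_fun_eq_card]
  obtain ⟨b, s, bN, hbN⟩ := N.exists_smith_normal_form_of_rank_eq (Pi.basisFun ℤ ι) hN
  have hs : ∀ i, s i ≠ 0 := fun i hi => bN.ne_zero i (by ext1; simp [hbN, hi])
  have hVsnf : V = (bN.toMatrix (Module.Basis.span hli))ᵀ * Matrix.diagonal s *
      ((Pi.basisFun ℤ ι).toMatrix b)ᵀ := by
    ext i j
    have h := congrArg (fun w : N => (w : ι → ℤ) j)
      (bN.sum_toMatrix_smul_self (Module.Basis.span hli) i)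
    simp only [Submodule.coe_sum, Submodule.coe_smul, hbN, Module.Basis.span_apply] at h
    rw [← h, Matrix.mul_apply]
    simp only [Matrix.mul_diagonal, Matrix.transpose_apply, Module.Basis.toMatrix_apply,
      Pi.basisFun_repr, Finset.sum_apply, Pi.smul_apply, smul_eq_mul, mul_assoc]
  refine ⟨bN.toMatrixTransposeUnit (Module.Basis.span hli) * Matrix.diagonalSignUnit s hs,
    (Pi.basisFun ℤ ι).toMatrixTransposeUnit b, fun i => (s i).natAbs,
    fun i => Int.natAbs_pos.mpr (hs i), hVsnf.trans ?_⟩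
  rw [Units.val_mul, mul_assoc _ (Matrix.diagonalSignUnit s hs : Matrix ι ι ℤ)]
  simp [Module.Basis.toMatrixTransposeUnit, Matrix.diagonalSignUnit, Matrix.diagonal_mul_diagonal,
    Int.sign_mul_abs]

end SmithNormalForm

theorem Matrix.vecMul_of_eq_zero_iff {m n R : Type*} [Fintype m] [NonUnitalNonAssocSemiring R]
    (l : m → R) (k : m → n → R) :
    l ᵥ* Matrix.of k = 0 ↔ ∀ j, ∑ i, l i * k i j = 0 := by
  simp [funext_iff, Matrix.vecMul, dotProduct]

section Det2

variable {n : ℕ} {k : Fin (n + 1) → Fin n → ZMod 2}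

theorem finrank_span_range_eq_iff {l : Fin (n + 1) → ZMod 2} (hl : l ≠ 0)
    (hrel : l ᵥ* Matrix.of k = 0) :
    Module.finrank (ZMod 2) (Submodule.span (ZMod 2) (Set.range k)) = n ↔
      ∀ m, m ᵥ* Matrix.of k = 0 → m = 0 ∨ m = l := by
  set L := (Matrix.of k).vecMulLinear
  have hdim : Module.finrank (ZMod 2) (Submodule.span (ZMod 2) (Set.range k)) +
      Module.finrank (ZMod 2) (LinearMap.ker L) = n + 1 := by
    have := L.finrank_range_add_finrank_ker
    rwa [range_vecMulLinear, Module.finrank_fin_fun] at this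
  have hker : Module.finrank (ZMod 2) (LinearMap.ker L) = 1 ↔
      ∀ m, m ᵥ* Matrix.of k = 0 → m = 0 ∨ m = l := by
    rw [finrank_eq_one_iff_of_nonzero' (⟨l, hrel⟩ : LinearMap.ker L)
      fun h => hl (congrArg Subtype.val h)]
    constructor
    · intro h m hm
      obtain ⟨c, hc⟩ := h ⟨m, hm⟩
      rcases c.eq_zero_or_eq_one with rfl | rfl
      · exact .inl (by simpa [eq_comm] using congrArg Subtype.val hc)
      · exact .inr (by simpa [eq_comm] using congrArg Subtype.val hc)
    · rintro h ⟨m, hm⟩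
      rcases h m hm with rfl | rfl
      · exact ⟨0, Subtype.ext (zero_smul _ _)⟩
      · exact ⟨1, one_smul _ _⟩
  rw [← hker]
  omega

theorem det2_eq_sum_add_one {l : Fin (n + 1) → ZMod 2} (hl : l ≠ 0)
    (hrel : l ᵥ* Matrix.of k = 0) (huniq : ∀ m, m ᵥ* Matrix.of k = 0 → m = 0 ∨ m = l) :
    det2 n k = ∑ i, l i + 1 := by
  have h : Module.finrank (ZMod 2) (Submodule.span (ZMod 2) (Set.range k)) = n ∧
      ∃ lam : Fin (n + 1) → ZMod 2, lam ≠ 0 ∧ ∀ j, ∑ i, lam i * k i j = 0 :=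
    ⟨(finrank_span_range_eq_iff hl hrel).mpr huniq, l, hl,
      (Matrix.vecMul_of_eq_zero_iff l k).mp hrel⟩
  rw [det2, dif_pos h]
  obtain ⟨hne, hrel'⟩ := h.2.choose_spec
  rcases huniq _ ((Matrix.vecMul_of_eq_zero_iff _ k).mpr hrel') with h0 | hl'
  · exact absurd h0 hne
  · rw [hl']

theorem det2_eq_zero_of_ne {l m : Fin (n + 1) → ZMod 2} (hl : l ≠ 0) (hm : m ≠ 0)
    (hlm : m ≠ l) (hlrel : l ᵥ* Matrix.of k = 0) (hmrel : m ᵥ* Matrix.of k = 0) :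
    det2 n k = 0 := by
  rw [det2, dif_neg]
  rintro ⟨hrank, -⟩
  rcases (finrank_span_range_eq_iff hl hlrel).mp hrank m hmrel with h | h
  exacts [hm h, hlm h]

end Det2

section RelationCoordinates

variable {R : Type*} [CommRing R] {n : ℕ}

theorem snoc_vecMul_snoc {m : Type*} [Fintype m] (μ : Fin n → R) (t : R) (B : Fin n → m → R)
    (a : m → R) :
    (Fin.snoc μ t : Fin (n + 1) → R) ᵥ* Matrix.of (Fin.snoc B a) =
      μ ᵥ* Matrix.of B + t • a := by
  ext j
  simp [Matrix.vecMul, dotProduct, Fin.sum_univ_castSucc]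

def snocCoords (P : GL (Fin n) R) : (Fin (n + 1) → R) ≃ (Fin n → R) × R where
  toFun l := (Fin.init l ᵥ* ↑P, l (Fin.last n))
  invFun p := Fin.snoc (p.1 ᵥ* ↑P⁻¹) p.2
  left_inv l := by simp [Matrix.vecMul_vecMul]
  right_inv p := by simp [Matrix.vecMul_vecMul]

theorem snocCoords_symm_zero (P : GL (Fin n) R) : (snocCoords P).symm 0 = 0 := by
  ext i
  refine Fin.lastCases ?_ (fun i => ?_) i <;> simp [snocCoords]

theorem snocCoords_symm_ne_zero (P : GL (Fin n) R) {p : (Fin n → R) × R} (hp : p ≠ 0) :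
    (snocCoords P).symm p ≠ 0 := by
  rwa [Ne, ← snocCoords_symm_zero P, (snocCoords P).symm.injective.eq_iff]

theorem sum_snocCoords_symm (P : GL (Fin n) R) (p : (Fin n → R) × R) :
    ∑ i, (snocCoords P).symm p i =
      ∑ i, p.1 i * ∑ j, (↑P⁻¹ : Matrix (Fin n) (Fin n) R) i j + p.2 := by
  simp only [snocCoords, Equiv.symm_mk, Equiv.coe_fn_mk, Fin.sum_univ_castSucc, Fin.snoc_castSucc,
    Fin.snoc_last, Matrix.vecMul, dotProduct, mul_sum]
  rw [sum_comm]

def IsDiagonalRelation (d α : Fin n → R) (p : (Fin n → R) × R) : Prop :=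
  ∀ i, p.1 i * d i + p.2 * α i = 0

theorem vecMul_snoc_mul_diagonal_mul_eq_zero_iff (P Q : GL (Fin n) R) (d a : Fin n → R)
    (l : Fin (n + 1) → R) :
    l ᵥ* Matrix.of (Fin.snoc (fun i => ((P : Matrix (Fin n) (Fin n) R) *
        Matrix.diagonal d * Q) i) a) = 0 ↔
      IsDiagonalRelation d (a ᵥ* ↑Q⁻¹) (snocCoords P l) := by
  set ν := (snocCoords P l).1
  set t := (snocCoords P l).2
  have h : l ᵥ* Matrix.of (Fin.snoc (fun i => ((P : Matrix (Fin n) (Fin n) R) *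
      Matrix.diagonal d * Q) i) a) =
        (ν ᵥ* Matrix.diagonal d + t • (a ᵥ* ↑Q⁻¹)) ᵥ* ↑Q := by
    conv_lhs => rw [← Fin.snoc_init_self l, snoc_vecMul_snoc]
    simp only [ν, t, snocCoords, Equiv.coe_fn_mk, Matrix.add_vecMul, Matrix.smul_vecMul,
      Matrix.vecMul_vecMul, Units.inv_mul, Matrix.vecMul_one]
    rfl
  rw [h, ← Matrix.zero_vecMul (Q : Matrix (Fin n) (Fin n) R),
    (Matrix.vecMul_injective_of_isUnit Q.isUnit).eq_iff, funext_iff]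
  simp only [Pi.add_apply, Matrix.vecMul_diagonal, Pi.smul_apply, smul_eq_mul, Pi.zero_apply]
  rfl

end RelationCoordinates

section Det2Diagonal

variable {n : ℕ} {P Q : GL (Fin n) (ZMod 2)} {d a : Fin n → ZMod 2}

theorem det2_snoc_mul_diagonal_mul_of_unique {p : (Fin n → ZMod 2) × ZMod 2} (hp : p ≠ 0)
    (hrel : IsDiagonalRelation d (a ᵥ* ↑Q⁻¹) p)
    (huniq : ∀ q, IsDiagonalRelation d (a ᵥ* ↑Q⁻¹) q → q = 0 ∨ q = p) :
    det2 n (Fin.snoc (fun i => ((P : Matrix (Fin n) (Fin n) (ZMod 2)) *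
        Matrix.diagonal d * Q) i) a) =
      ∑ i, p.1 i * ∑ j, (↑P⁻¹ : Matrix (Fin n) (Fin n) (ZMod 2)) i j + p.2 + 1 := by
  have hiff := vecMul_snoc_mul_diagonal_mul_eq_zero_iff P Q d a
  rw [det2_eq_sum_add_one (l := (snocCoords P).symm p) (snocCoords_symm_ne_zero P hp),
    sum_snocCoords_symm]
  · rwa [hiff, Equiv.apply_symm_apply]
  · intro m hm
    rcases huniq _ ((hiff m).mp hm) with h | h
    · left
      rw [← (snocCoords P).symm_apply_apply m, h, snocCoords_symm_zero]
    · exact .inr ((Equiv.eq_symm_apply _).mpr h)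

theorem det2_snoc_mul_diagonal_mul_of_ne {p q : (Fin n → ZMod 2) × ZMod 2} (hp : p ≠ 0)
    (hq : q ≠ 0) (hpq : q ≠ p) (hprel : IsDiagonalRelation d (a ᵥ* ↑Q⁻¹) p)
    (hqrel : IsDiagonalRelation d (a ᵥ* ↑Q⁻¹) q) :
    det2 n (Fin.snoc (fun i => ((P : Matrix (Fin n) (Fin n) (ZMod 2)) *
        Matrix.diagonal d * Q) i) a) = 0 := by
  have hiff := vecMul_snoc_mul_diagonal_mul_eq_zero_iff P Q d a
  refine det2_eq_zero_of_ne (snocCoords_symm_ne_zero P hp) (snocCoords_symm_ne_zero P hq)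
    ((snocCoords P).symm.injective.ne hpq) ?_ ?_
  · rwa [hiff, Equiv.apply_symm_apply]
  · rwa [hiff, Equiv.apply_symm_apply]

theorem isDiagonalRelation_single {α : Fin n → ZMod 2} {i : Fin n} (hdi : d i = 0) :
    IsDiagonalRelation d α (Pi.single i 1, 0) := by
  intro j
  rcases eq_or_ne j i with rfl | hj <;> simp [*]

theorem det2_snoc_mul_diagonal_mul_of_forall_eq_one (hd : ∀ i, d i = 1) :
    det2 n (Fin.snoc (fun i => ((P : Matrix (Fin n) (Fin n) (ZMod 2)) *
        Matrix.diagonal d * Q) i) a) =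
      ∑ i, (a ᵥ* ↑Q⁻¹) i * ∑ j, (↑P⁻¹ : Matrix (Fin n) (Fin n) (ZMod 2)) i j := by
  rw [det2_snoc_mul_diagonal_mul_of_unique (p := (a ᵥ* ↑Q⁻¹, 1)), add_assoc,
    CharTwo.add_self_eq_zero, add_zero]
  · simp [Prod.ext_iff]
  · intro i
    simp [hd, CharTwo.add_self_eq_zero]
  · rintro ⟨ν, t⟩ hq
    simp only [IsDiagonalRelation, hd, mul_one] at hq
    rcases t.eq_zero_or_eq_one with rfl | rfl
    · left
      ext i <;> simp_all
    · right
      ext i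
      · simpa [CharTwo.add_eq_zero] using hq i
      · rfl

theorem det2_snoc_mul_diagonal_mul_of_eq_zero_of_eq_zero {i i' : Fin n} (hii' : i' ≠ i)
    (hdi : d i = 0) (hdi' : d i' = 0) :
    det2 n (Fin.snoc (fun i => ((P : Matrix (Fin n) (Fin n) (ZMod 2)) *
        Matrix.diagonal d * Q) i) a) = 0 :=
  det2_snoc_mul_diagonal_mul_of_ne (by simp [Prod.ext_iff]) (by simp [Prod.ext_iff])
    (fun h => by simpa [hii'] using congrFun (congrArg Prod.fst h) i')
    (isDiagonalRelation_single hdi) (isDiagonalRelation_single hdi')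

theorem det2_snoc_mul_diagonal_mul_of_eq_zero_of_apply_eq_zero {i : Fin n} (hdi : d i = 0)
    (hd : ∀ j ≠ i, d j = 1) (hα : (a ᵥ* ↑Q⁻¹) i = 0) :
    det2 n (Fin.snoc (fun i => ((P : Matrix (Fin n) (Fin n) (ZMod 2)) *
        Matrix.diagonal d * Q) i) a) = 0 := by
  refine det2_snoc_mul_diagonal_mul_of_ne (p := (Pi.single i 1, 0)) (q := (a ᵥ* ↑Q⁻¹, 1))
    (by simp [Prod.ext_iff]) (by simp [Prod.ext_iff]) (by simp [Prod.ext_iff])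
    (isDiagonalRelation_single hdi) fun j => ?_
  rcases eq_or_ne j i with rfl | hj
  · simp only [hdi, hα, mul_zero, add_zero]
  · simp only [hd j hj, mul_one, one_mul, CharTwo.add_self_eq_zero]

theorem det2_snoc_mul_diagonal_mul_of_eq_zero_of_apply_eq_one {i : Fin n} (hdi : d i = 0)
    (hd : ∀ j ≠ i, d j = 1) (hα : (a ᵥ* ↑Q⁻¹) i = 1) :
    det2 n (Fin.snoc (fun i => ((P : Matrix (Fin n) (Fin n) (ZMod 2)) *
        Matrix.diagonal d * Q) i) a) =
      ∑ j, (↑P⁻¹ : Matrix (Fin n) (Fin n) (ZMod 2)) i j + 1 := by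
  rw [det2_snoc_mul_diagonal_mul_of_unique (p := (Pi.single i 1, 0)) (by simp [Prod.ext_iff])
    (isDiagonalRelation_single hdi)]
  · simp [Pi.single_apply]
  · rintro ⟨ν, t⟩ hq
    have ht : t = 0 := by simpa only [hdi, hα, mul_zero, mul_one, zero_add] using hq i
    have hν : ∀ j ≠ i, ν j = 0 := fun j hj => by
      simpa only [ht, hd j hj, mul_one, zero_mul, add_zero] using hq j
    subst ht
    rcases (ν i).eq_zero_or_eq_one with h | h
    · left
      ext j
      · rcases eq_or_ne j i with rfl | hj
        exacts [h, hν j hj]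
      · rfl
    · right
      ext j
      · rcases eq_or_ne j i with rfl | hj
        · simp [h]
        · simp [hν j hj, hj]
      · rfl

variable (P Q d a)

theorem det2_snoc_mul_diagonal_mul :
    det2 n (Fin.snoc (fun i => ((P : Matrix (Fin n) (Fin n) (ZMod 2)) *
        Matrix.diagonal d * Q) i) a) =
      ∑ i, (d i + 1 + ∑ j, (↑P⁻¹ : Matrix (Fin n) (Fin n) (ZMod 2)) i j) *
        (a ᵥ* ↑Q⁻¹) i * ∏ j ∈ univ.erase i, d j := by
  by_cases hodd : ∀ i, d i = 1
  · rw [det2_snoc_mul_diagonal_mul_of_forall_eq_one hodd]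
    refine sum_congr rfl fun i _ => ?_
    simp only [hodd, CharTwo.add_self_eq_zero, zero_add, prod_const_one, mul_one]
    exact mul_comm _ _
  obtain ⟨i, hi⟩ := not_forall.mp hodd
  have hdi : d i = 0 := (d i).eq_zero_or_eq_one.resolve_right hi
  have hprod : ∀ j ≠ i, ∏ l ∈ univ.erase j, d l = 0 := fun j hj =>
    prod_eq_zero (mem_erase.mpr ⟨hj.symm, mem_univ i⟩) hdi
  by_cases htwo : ∃ i', i' ≠ i ∧ d i' = 0
  · obtain ⟨i', hi'i, hdi'⟩ := htwo
    rw [det2_snoc_mul_diagonal_mul_of_eq_zero_of_eq_zero hi'i hdi hdi', eq_comm]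
    refine sum_eq_zero fun j _ => ?_
    rcases eq_or_ne j i with rfl | hj
    · rw [prod_eq_zero (mem_erase.mpr ⟨hi'i, mem_univ i'⟩) hdi', mul_zero]
    · rw [hprod j hj, mul_zero]
  push Not at htwo
  have hd : ∀ j ≠ i, d j = 1 := fun j hj => (d j).eq_zero_or_eq_one.resolve_left (htwo j hj)
  rw [sum_eq_single i (fun j _ hj => by rw [hprod j hj, mul_zero]) (by simp),
    prod_eq_one fun j hj => hd j (ne_of_mem_erase hj), hdi]
  rcases ((a ᵥ* ↑Q⁻¹) i).eq_zero_or_eq_one with hα | hα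
  · rw [det2_snoc_mul_diagonal_mul_of_eq_zero_of_apply_eq_zero hdi hd hα, hα]
    ring
  · rw [det2_snoc_mul_diagonal_mul_of_eq_zero_of_apply_eq_one hdi hd hα, hα]
    ring

end Det2Diagonal

theorem det2_snoc_intCast_mul_diagonal_mul {n : ℕ} (P Q : GL (Fin n) ℤ) (d : Fin n → ℕ)
    (a : Fin n → ℤ) :
    det2 n (Fin.snoc (fun i j => ((((P : Matrix (Fin n) (Fin n) ℤ) *
        Matrix.diagonal (fun i => (d i : ℤ)) * Q) i j : ℤ) : ZMod 2))
        (fun j => ((a j : ℤ) : ZMod 2))) =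
      ((∑ i, ((d i : ℤ) + 1 + ∑ j, (↑P⁻¹ : Matrix (Fin n) (Fin n) ℤ) i j) *
        (a ᵥ* ↑Q⁻¹) i * ∏ j ∈ univ.erase i, (d j : ℤ) : ℤ) : ZMod 2) := by
  set f := Int.castRingHom (ZMod 2)
  have hmap : ∀ g : GL (Fin n) ℤ, (Matrix.GeneralLinearGroup.map f g :
      Matrix (Fin n) (Fin n) (ZMod 2)) = (g : Matrix (Fin n) (Fin n) ℤ).map f := fun g => by
    ext i j
    exact Matrix.GeneralLinearGroup.map_apply f i j g
  have hrows : (fun i j => ((((P : Matrix (Fin n) (Fin n) ℤ) *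
      Matrix.diagonal (fun i => (d i : ℤ)) * Q) i j : ℤ) : ZMod 2)) =
      fun i => ((Matrix.GeneralLinearGroup.map f P : Matrix (Fin n) (Fin n) (ZMod 2)) *
        Matrix.diagonal (fun i => f (d i)) * Matrix.GeneralLinearGroup.map f Q) i := by
    rw [hmap, hmap, ← Matrix.diagonal_map (map_zero f), ← Matrix.map_mul, ← Matrix.map_mul]
    rfl
  rw [hrows, det2_snoc_mul_diagonal_mul, ← map_inv, ← map_inv, hmap, hmap, ← eq_intCast f]
  simp only [map_sum, map_mul, map_add, map_prod, map_one, Matrix.map_apply, RingHom.map_vecMul]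
  rfl

/-- binomial Vieta formula. For a binomial system `x^{vᵢ} = -1`, `i = 1,…,n`,
with `V` the integer matrix of exponent vectors, `det V ≠ 0`, and `S` the (finite) set of its
solutions in the torus `(ℂ∖0)ⁿ`, the product of `x^a` over all solutions equals
`(-1)^{det₂(v̄₁,…,v̄ₙ,ā)}`, with the bars denoting reduction mod 2. -/
theorem binomial_vieta (n : ℕ) (V : Matrix (Fin n) (Fin n) ℤ) (hV : V.det ≠ 0)
    (a : Fin n → ℤ) (S : Finset (Fin n → ℂˣ))
    (hS : ∀ x : Fin n → ℂˣ, x ∈ S ↔ ∀ i, (∏ j, x j ^ V i j) = -1) :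
    (∏ x ∈ S, ∏ j, x j ^ a j) =
      (-1 : ℂˣ) ^ (det2 n (Fin.snoc (fun i j => ((V i j : ℤ) : ZMod 2))
        (fun j => ((a j : ℤ) : ZMod 2)))).val := by
  obtain ⟨P, Q, d, hd, rfl⟩ := V.exists_eq_mul_diagonal_mul hV
  choose R hR hRcard hRprod using fun i => IsAlgClosed.exists_finset_units_pow_eq
    (Nat.cast_ne_zero.mpr (hd i).ne')
    ((-1 : ℂˣ) ^ ∑ j, (↑P⁻¹ : Matrix (Fin n) (Fin n) ℤ) i j)
  have hSR : ∀ x, x ∈ S ↔ monomialEquiv Q x ∈ Fintype.piFinset R := fun x => by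
    simp only [hS, Fintype.mem_piFinset, hR]
    exact forall_laurentMonomial_mul_diagonal_mul_eq_iff P Q d (-1) x
  calc ∏ x ∈ S, ∏ j, x j ^ a j
      = ∏ y ∈ Fintype.piFinset R, laurentMonomial y (a ᵥ* ↑Q⁻¹) :=
        prod_equiv (monomialEquiv Q) hSR fun x _ => (laurentMonomial_monomialEquiv Q x a).symm
    _ = ∏ i, ((-1) ^ (d i + 1) * (-1) ^ ∑ j, (↑P⁻¹ : Matrix (Fin n) (Fin n) ℤ) i j) ^
          ((a ᵥ* ↑Q⁻¹) i * ∏ j ∈ univ.erase i, (d j : ℤ)) := by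
        simp only [prod_piFinset_laurentMonomial, hRprod, hRcard]
    _ = (-1) ^ ∑ i, ((d i : ℤ) + 1 + ∑ j, (↑P⁻¹ : Matrix (Fin n) (Fin n) ℤ) i j) *
          (a ᵥ* ↑Q⁻¹) i * ∏ j ∈ univ.erase i, (d j : ℤ) := by
        rw [← prod_zpow_eq_zpow_sum]
        refine prod_congr rfl fun i _ => ?_
        rw [← zpow_natCast, ← zpow_add, ← zpow_mul, mul_assoc]
        push_cast
        rfl
    _ = _ := by rw [neg_one_zpow_eq_pow_val, det2_snoc_intCast_mul_diagonal_mul]
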